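/- arXiv:2011.12723 — 3 statements merged into one kernel-verified Lean document; each statement's English description precedes it below -/
import Mathlib

section
/- Let C'', C, D'', D', D be ordinary categories fitting into a commutative square with functors g'' : C'' → D'' fully faithful and essentially surjective onto D'', a functor p : C' → C that is an isofibration (every isomorphism in C with a lift of its source lifts to an isomorphism in C'), and g : C → D, g' : C' → D' fully faithful and essentially surjective. Then the induced functor on pullbacks f : C'' ×_C C' → D'' ×_D D' (strict pullbacks of categories) is fully faithful and essentially surjective. -/
open CategoryTheory

universe v u

/-- The strict pullback of two functors in the 1-category of categories:
objects are pairs of objects together with an *equality* of their images. -/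
structure CatPB {C D E : Type u} [Category.{v} C] [Category.{v} D] [Category.{v} E]
    (F : C ⥤ E) (G : D ⥤ E) : Type u where
  l : C
  r : D
  w : F.obj l = G.obj r

namespace CatPB

variable {C D E : Type u} [Category.{v} C] [Category.{v} D] [Category.{v} E]
  {F : C ⥤ E} {G : D ⥤ E}

instance : Category (CatPB F G) where
  Hom X Y := { p : (X.l ⟶ Y.l) × (X.r ⟶ Y.r) //
    F.map p.1 ≫ eqToHom Y.w = eqToHom X.w ≫ G.map p.2 }
  id X := ⟨(𝟙 _, 𝟙 _), by simp⟩
  comp {X Y Z} f g := ⟨(f.1.1 ≫ g.1.1, f.1.2 ≫ g.1.2), by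
    have hf := f.2
    have hg := g.2
    simp only [Functor.map_comp, Category.assoc]
    rw [hg, ← Category.assoc, hf, Category.assoc]⟩
  id_comp f := Subtype.ext (Prod.ext (Category.id_comp _) (Category.id_comp _))
  comp_id f := Subtype.ext (Prod.ext (Category.comp_id _) (Category.comp_id _))
  assoc f g h := Subtype.ext (Prod.ext (Category.assoc _ _ _) (Category.assoc _ _ _))

/-- The first projection of the strict pullback of categories. -/
def fst (F : C ⥤ E) (G : D ⥤ E) : CatPB F G ⥤ C where
  obj X := X.l
  map f := f.1.1
  map_id _ := rfl
  map_comp _ _ := rfl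

/-- The second projection of the strict pullback of categories. -/
def snd (F : C ⥤ E) (G : D ⥤ E) : CatPB F G ⥤ D where
  obj X := X.r
  map f := f.1.2
  map_id _ := rfl
  map_comp _ _ := rfl

end CatPB

/-- A functor is an isofibration if every isomorphism in the target whose source is in the
image of the functor lifts to an isomorphism in the source with prescribed source. -/
def IsIsofibration {C D : Type u} [Category.{v} C] [Category.{v} D] (p : C ⥤ D) : Prop :=
  ∀ (c : C) (d : D) (α : p.obj c ≅ d),
    ∃ (c' : C) (h : p.obj c' = d) (β : c ≅ c'), p.map β.hom ≫ eqToHom h = α.hom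

section MyHelpers
variable {C D E : Type u} [Category.{v} C] [Category.{v} D] [Category.{v} E]
  {F : C ⥤ E} {G : D ⥤ E}

lemma CatPB.hom_ext' {X Y : CatPB F G} (φ ψ : X ⟶ Y) (h1 : φ.1.1 = ψ.1.1)
    (h2 : φ.1.2 = ψ.1.2) : φ = ψ := Subtype.ext (Prod.ext h1 h2)

def CatPB.mkIso' {X Y : CatPB F G} (e1 : X.l ≅ Y.l) (e2 : X.r ≅ Y.r)
    (coh : F.map e1.hom ≫ eqToHom Y.w = eqToHom X.w ≫ G.map e2.hom) : X ≅ Y where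
  hom := ⟨(e1.hom, e2.hom), coh⟩
  inv := ⟨(e1.inv, e2.inv), by
    rw [← cancel_mono (G.map e2.hom)]
    rw [Category.assoc, Category.assoc, ← coh, ← Category.assoc, ← Functor.map_comp]
    simp⟩
  hom_inv_id := Subtype.ext (Prod.ext e1.hom_inv_id e2.hom_inv_id)
  inv_hom_id := Subtype.ext (Prod.ext e1.inv_hom_id e2.inv_hom_id)
end MyHelpers

/-- The cube lemma: given a map of strict pullback squares of categories in which the
three given comparison functors are equivalences (fully faithful and essentially
surjective) and `p` is an isofibration, the induced functor on pullbacks (i.e. any functor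
commuting strictly with the two projections) is fully faithful and essentially surjective. -/
theorem stmt0 {C'' C' C D'' D' D : Type u}
    [Category.{v} C''] [Category.{v} C'] [Category.{v} C]
    [Category.{v} D''] [Category.{v} D'] [Category.{v} D]
    (h : C'' ⥤ C) (p : C' ⥤ C) (k : D'' ⥤ D) (q : D' ⥤ D)
    (g : C ⥤ D) (g' : C' ⥤ D') (g'' : C'' ⥤ D'')
    (sq1 : h ⋙ g = g'' ⋙ k) (sq2 : p ⋙ g = g' ⋙ q)
    (hp : IsIsofibration p)
    (hgFull : g.Full) (hgFaithful : g.Faithful) (hgEssSurj : g.EssSurj)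
    (hg'Full : g'.Full) (hg'Faithful : g'.Faithful) (hg'EssSurj : g'.EssSurj)
    (hg''Full : g''.Full) (hg''Faithful : g''.Faithful) (hg''EssSurj : g''.EssSurj)
    (f : CatPB h p ⥤ CatPB k q)
    (hf1 : f ⋙ CatPB.fst k q = CatPB.fst h p ⋙ g'')
    (hf2 : f ⋙ CatPB.snd k q = CatPB.snd h p ⋙ g') :
    f.Full ∧ f.Faithful ∧ f.EssSurj := by
  have hl : ∀ X : CatPB h p, (f.obj X).l = g''.obj X.l := fun X => Functor.congr_obj hf1 X
  have hr : ∀ X : CatPB h p, (f.obj X).r = g'.obj X.r := fun X => Functor.congr_obj hf2 X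
  have hml : ∀ {X Y : CatPB h p} (φ : X ⟶ Y),
      (f.map φ).1.1 = eqToHom (hl X) ≫ g''.map φ.1.1 ≫ eqToHom (hl Y).symm :=
    fun {X Y} φ => Functor.congr_hom hf1 φ
  have hmr : ∀ {X Y : CatPB h p} (φ : X ⟶ Y),
      (f.map φ).1.2 = eqToHom (hr X) ≫ g'.map φ.1.2 ≫ eqToHom (hr Y).symm :=
    fun {X Y} φ => Functor.congr_hom hf2 φ
  refine ⟨⟨fun {X Y} ψ => ?_⟩, ⟨fun {X Y} φ φ' hφ => ?_⟩, ⟨fun Y => ?_⟩⟩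
  · -- Full
    set u := g''.preimage (eqToHom (hl X).symm ≫ ψ.1.1 ≫ eqToHom (hl Y)) with hu
    set v := g'.preimage (eqToHom (hr X).symm ≫ ψ.1.2 ≫ eqToHom (hr Y)) with hv
    have hgu : g''.map u = eqToHom (hl X).symm ≫ ψ.1.1 ≫ eqToHom (hl Y) := g''.map_preimage _
    have hgv : g'.map v = eqToHom (hr X).symm ≫ ψ.1.2 ≫ eqToHom (hr Y) := g'.map_preimage _
    have coh : h.map u ≫ eqToHom Y.w = eqToHom X.w ≫ p.map v := by
      apply g.map_injective
      have e1 := Functor.congr_hom sq1 u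
      have e2 := Functor.congr_hom sq2 v
      simp only [Functor.comp_map] at e1 e2
      have hψ := ψ.2
      simp only [Functor.map_comp, eqToHom_map, e1, e2, hgu, hgv, Category.assoc,
        eqToHom_trans, eqToHom_trans_assoc]
      have hψ' : q.map ψ.1.2 = eqToHom (f.obj X).w.symm ≫ k.map ψ.1.1 ≫ eqToHom (f.obj Y).w := by
        rw [hψ]; simp
      rw [hψ']
      simp
    refine ⟨⟨(u, v), coh⟩, ?_⟩
    apply CatPB.hom_ext'
    · rw [hml]; simp [hgu]
    · rw [hmr]; simp [hgv]
  · -- Faithful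
    apply CatPB.hom_ext'
    · apply g''.map_injective
      have := congrArg (fun ξ => (Subtype.val ξ).1) hφ
      simp only [hml] at this
      rwa [← Category.assoc, ← Category.assoc, cancel_mono, cancel_epi] at this
    · apply g'.map_injective
      have := congrArg (fun ξ => (Subtype.val ξ).2) hφ
      simp only [hmr] at this
      rwa [← Category.assoc, ← Category.assoc, cancel_mono, cancel_epi] at this
  · -- EssSurj
    haveI := hgFull; haveI := hgFaithful
    obtain ⟨c'', ⟨α⟩⟩ := hg''EssSurj.mem_essImage Y.l
    obtain ⟨c0, ⟨β⟩⟩ := hg'EssSurj.mem_essImage Y.r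
    have e1 : k.obj (g''.obj c'') = g.obj (h.obj c'') := (Functor.congr_obj sq1 c'').symm
    have e2 : g.obj (p.obj c0) = q.obj (g'.obj c0) := Functor.congr_obj sq2 c0
    set γ : g.obj (p.obj c0) ≅ g.obj (h.obj c'') :=
      eqToIso e2 ≪≫ q.mapIso β ≪≫ eqToIso Y.w.symm ≪≫ (k.mapIso α).symm ≪≫ eqToIso e1 with hγ
    set δ : p.obj c0 ≅ h.obj c'' := g.preimageIso γ with hδ
    have hgδ : g.map δ.inv = γ.inv := g.map_preimage _
    obtain ⟨c', hc, ι, hι⟩ := hp c0 (h.obj c'') δ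
    have hpι : p.map ι.inv = eqToHom hc ≫ δ.inv := by
      rw [← cancel_epi (p.map ι.hom), ← Functor.map_comp, Iso.hom_inv_id,
        ← Category.assoc, hι, Iso.hom_inv_id]
      simp
    have hqι : q.map (g'.map ι.inv) =
        eqToHom (Functor.congr_obj sq2 c').symm ≫ g.map (p.map ι.inv) ≫
          eqToHom (Functor.congr_obj sq2 c0) := by
      have := Functor.congr_hom sq2 ι.inv
      simp only [Functor.comp_map] at this
      rw [this]; simp
    have ββ : q.map β.inv ≫ q.map β.hom = 𝟙 _ := by rw [← q.map_comp]; simp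
    refine ⟨⟨c'', c', hc.symm⟩, ⟨CatPB.mkIso' (eqToIso (hl _) ≪≫ α)
      (eqToIso (hr _) ≪≫ g'.mapIso ι.symm ≪≫ β) ?_⟩⟩
    simp only [Iso.trans_hom, eqToIso.hom, Iso.symm_hom, Functor.mapIso_hom, Functor.mapIso_inv,
      Functor.map_comp, eqToHom_map, Category.assoc, hqι, hpι, hgδ, hγ, Iso.trans_inv,
      eqToIso.inv, Iso.symm_inv, eqToHom_trans, eqToHom_trans_assoc]
    simp only [eqToHom_refl, Category.id_comp]
    rw [ββ]
    simp
end

section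
/- Let p : C' → C be an isofibration of categories, g : C → D a fully faithful functor, g' : C' → D' an essentially surjective functor, and q : D' → D a functor, such that q ∘ g' = g ∘ p. Then for every object c of C, object d' of D' and isomorphism α : g(c) ≅ q(d') in D, there exists an object c' of C' with p(c') = c and an isomorphism α' : g'(c') ≅ d' in D' such that q(α') = α under the identifications q(g'(c')) = g(p(c')) = g(c). -/
open CategoryTheory

universe v u

/-- Given a strictly commuting square of functors `q ∘ g' = g ∘ p` with `p` an isofibration,
`g` fully faithful and `g'` essentially surjective, every object `c` of `C`, object `d'`
of `D'` and isomorphism `α : g(c) ≅ q(d')` can be lifted: there is an object `c'` of `C'`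
with `p(c') = c` and an isomorphism `α' : g'(c') ≅ d'` with `q(α') = α` up to the canonical
identification `q(g'(c')) = g(p(c')) = g(c)`. -/
theorem stmt1 {C' C D' D : Type u}
    [Category.{v} C'] [Category.{v} C] [Category.{v} D'] [Category.{v} D]
    (p : C' ⥤ C) (g : C ⥤ D) (g' : C' ⥤ D') (q : D' ⥤ D)
    (hsq : g' ⋙ q = p ⋙ g)
    (hp : IsIsofibration p)
    (hgFull : g.Full) (hgFaithful : g.Faithful)
    (hg'EssSurj : g'.EssSurj) :
    ∀ (c : C) (d' : D') (α : g.obj c ≅ q.obj d'),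
      ∃ (c' : C') (h : p.obj c' = c) (α' : g'.obj c' ≅ d')
        (e : q.obj (g'.obj c') = g.obj c),
        q.map α'.hom = eqToHom e ≫ α.hom := by
  intro c d' α
  obtain ⟨c₀, ⟨ε⟩⟩ := hg'EssSurj.mem_essImage d'
  have e₀ : q.obj (g'.obj c₀) = g.obj (p.obj c₀) := Functor.congr_obj hsq c₀
  -- an iso g(p c₀) ≅ g c
  let φ : g.obj (p.obj c₀) ≅ g.obj c :=
    eqToIso e₀.symm ≪≫ q.mapIso ε ≪≫ α.symm
  let β : p.obj c₀ ≅ c := g.preimageIso φ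
  obtain ⟨c', h, γ, hγ⟩ := hp c₀ c β
  have e₁ : q.obj (g'.obj c') = g.obj (p.obj c') := Functor.congr_obj hsq c'
  refine ⟨c', h, g'.mapIso γ.symm ≪≫ ε, e₁.trans (by rw [h]), ?_⟩
  have hq : ∀ {x y : C'} (f : x ⟶ y), q.map (g'.map f) =
      eqToHom (Functor.congr_obj hsq x) ≫ g.map (p.map f) ≫
        eqToHom (Functor.congr_obj hsq y).symm := by
    intro x y f
    have := Functor.congr_hom hsq f
    simpa using this
  have hpγ : p.map γ.inv = eqToHom h ≫ β.inv := by
    have : p.map γ.hom = β.hom ≫ eqToHom h.symm := by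
      rw [← hγ]; simp
    rw [← cancel_epi (p.map γ.hom), ← p.map_comp, Iso.hom_inv_id, this]
    simp
  have hβ : g.map β.hom = φ.hom := g.map_preimage _
  have hβinv : g.map β.inv = φ.inv := by
    rw [← cancel_epi (g.map β.hom), ← g.map_comp, Iso.hom_inv_id, hβ]
    simp
  rw [Iso.trans_hom, Functor.mapIso_symm, Iso.symm_hom, Functor.mapIso_inv, q.map_comp,
    hq γ.inv, hpγ, g.map_comp, hβinv, eqToHom_map]
  simp [φ]
end

section
/- Let (C_n)_{n ≥ 0} be an inverse system of categories with transition functors p_n : C_n → C_{n-1} all isofibrations, let (D_n) be another inverse system with transition functors q_n, and let (g_n : C_n → D_n) be a compatible family of functors each of which is an equivalence of categories (fully faithful and essentially surjective). Then the induced functor between the (strict) limits f : lim C_n → lim D_n is an equivalence of categories. -/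
open CategoryTheory

universe v u

/-- The strict limit of a tower of categories `... → C 2 → C 1 → C 0`: objects are
strictly compatible families of objects, morphisms are strictly compatible families of
morphisms. -/
structure TowerLim (C : ℕ → Type u) [∀ n, Category.{v} (C n)]
    (p : ∀ n, C (n + 1) ⥤ C n) : Type (max u v) where
  pt : ∀ n, C n
  w : ∀ n, (p n).obj (pt (n + 1)) = pt n

namespace TowerLim

variable {C : ℕ → Type u} [∀ n, Category.{v} (C n)] {p : ∀ n, C (n + 1) ⥤ C n}

instance : Category (TowerLim C p) where
  Hom X Y := { f : ∀ n, X.pt n ⟶ Y.pt n //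
    ∀ n, (p n).map (f (n + 1)) = eqToHom (X.w n) ≫ f n ≫ eqToHom (Y.w n).symm }
  id X := ⟨fun _ => 𝟙 _, fun n => by simp⟩
  comp {X Y Z} f g := ⟨fun n => f.1 n ≫ g.1 n, fun n => by
    rw [Functor.map_comp, f.2 n, g.2 n]; simp⟩
  id_comp f := Subtype.ext (funext fun n => Category.id_comp _)
  comp_id f := Subtype.ext (funext fun n => Category.comp_id _)
  assoc f g h := Subtype.ext (funext fun n => Category.assoc _ _ _)

/-- The projection from the strict limit of a tower of categories to its `n`-th stage. -/
def proj (C : ℕ → Type u) [∀ n, Category.{v} (C n)] (p : ∀ n, C (n + 1) ⥤ C n) (n : ℕ) :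
    TowerLim C p ⥤ C n where
  obj X := X.pt n
  map f := f.1 n
  map_id _ := rfl
  map_comp _ _ := rfl

end TowerLim

section Aux

variable {C : ℕ → Type u} [∀ n, Category.{v} (C n)] {p : ∀ n, C (n + 1) ⥤ C n}

lemma TowerLim.isIso_of_components {X Y : TowerLim C p} (φ : X ⟶ Y)
    (h : ∀ n, IsIso (φ.1 n)) : IsIso φ := by
  refine ⟨⟨⟨fun n => inv (φ.1 n), fun n => ?_⟩, ?_, ?_⟩⟩
  · rw [Functor.map_inv]
    apply IsIso.inv_eq_of_hom_inv_id
    rw [φ.2 n]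
    simp
  · exact Subtype.ext (funext fun n => IsIso.hom_inv_id (φ.1 n))
  · exact Subtype.ext (funext fun n => IsIso.inv_hom_id (φ.1 n))

end Aux
/-- The tower lemma: given a map of towers of categories, where all the transition functors
of the first tower are isofibrations and all comparison functors are equivalences (fully
faithful and essentially surjective), the induced functor on the strict limits (i.e. any
functor commuting strictly with all projections) is an equivalence of categories. -/
theorem stmt2 (C D : ℕ → Type u) [∀ n, Category.{v} (C n)] [∀ n, Category.{v} (D n)]
    (p : ∀ n, C (n + 1) ⥤ C n) (q : ∀ n, D (n + 1) ⥤ D n)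
    (g : ∀ n, C n ⥤ D n)
    (hsq : ∀ n, p n ⋙ g n = g (n + 1) ⋙ q n)
    (hiso : ∀ n, IsIsofibration (p n))
    (hFull : ∀ n, (g n).Full) (hFaithful : ∀ n, (g n).Faithful) (hEssSurj : ∀ n, (g n).EssSurj)
    (f : TowerLim C p ⥤ TowerLim D q)
    (hf : ∀ n, f ⋙ TowerLim.proj D q n = TowerLim.proj C p n ⋙ g n) :
    f.Full ∧ f.Faithful ∧ f.EssSurj := by
  haveI : ∀ n, (g n).Full := hFull
  haveI : ∀ n, (g n).Faithful := hFaithful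
  haveI : ∀ n, (g n).EssSurj := hEssSurj
  have hfo : ∀ (n) (X : TowerLim C p), (f.obj X).pt n = (g n).obj (X.pt n) :=
    fun n X => Functor.congr_obj (hf n) X
  have hfm : ∀ (n) {X Y : TowerLim C p} (u : X ⟶ Y),
      (f.map u).1 n = eqToHom (hfo n X) ≫ (g n).map (u.1 n) ≫ eqToHom (hfo n Y).symm :=
    fun n {X Y} u => Functor.congr_hom (hf n) u
  have hso : ∀ (n) (x : C (n + 1)), (g n).obj ((p n).obj x) = (q n).obj ((g (n + 1)).obj x) :=
    fun n x => Functor.congr_obj (hsq n) x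
  have hsm : ∀ (n) {x y : C (n + 1)} (u : x ⟶ y),
      (g n).map ((p n).map u)
        = eqToHom (hso n x) ≫ (q n).map ((g (n + 1)).map u) ≫ eqToHom (hso n y).symm :=
    fun n {x y} u => Functor.congr_hom (hsq n) u
  refine ⟨?_, ?_, ?_⟩
  · -- Full
    constructor
    intro X Y v
    let u : ∀ n, X.pt n ⟶ Y.pt n :=
      fun n => (g n).preimage (eqToHom (hfo n X).symm ≫ v.1 n ≫ eqToHom (hfo n Y))
    have hu : ∀ n, (g n).map (u n) = eqToHom (hfo n X).symm ≫ v.1 n ≫ eqToHom (hfo n Y) :=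
      fun n => (g n).map_preimage _
    have hcompat : ∀ n, (p n).map (u (n + 1)) = eqToHom (X.w n) ≫ u n ≫ eqToHom (Y.w n).symm := by
      intro n
      apply (g n).map_injective
      rw [hsm n, hu (n + 1)]
      have hv := v.2 n
      simp only [Functor.map_comp, eqToHom_map, hv, hu n, eqToHom_trans,
        eqToHom_trans_assoc, Category.assoc]
    refine ⟨⟨u, hcompat⟩, ?_⟩
    apply Subtype.ext
    funext n
    rw [hfm n, hu n]
    simp
  · -- Faithful
    constructor
    intro X Y a b hab
    apply Subtype.ext
    funext n
    apply (g n).map_injective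
    have h1 := (hfm n a).symm.trans ((congrArg (fun w => w.1 n) hab).trans (hfm n b))
    rwa [cancel_epi, cancel_mono] at h1
  · -- EssSurj
    constructor
    intro Y
    have step : ∀ (n : ℕ) (c : C n) (α : (g n).obj c ≅ Y.pt n),
        ∃ (c' : C (n + 1)) (h : (p n).obj c' = c) (α' : (g (n + 1)).obj c' ≅ Y.pt (n + 1)),
          eqToHom (hso n c') ≫ (q n).map α'.hom
            = (g n).map (eqToHom h) ≫ α.hom ≫ eqToHom (Y.w n).symm := by
      intro n c α
      set d := (g (n + 1)).objPreimage (Y.pt (n + 1)) with hd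
      set γ := (g (n + 1)).objObjPreimageIso (Y.pt (n + 1)) with hγ
      let δ : (g n).obj ((p n).obj d) ≅ (g n).obj c :=
        eqToIso (hso n d) ≪≫ (q n).mapIso γ ≪≫ eqToIso (Y.w n) ≪≫ α.symm
      let ε : (p n).obj d ≅ c := (g n).preimageIso δ
      obtain ⟨c'', h, β, hβ⟩ := hiso n d c ε
      refine ⟨c'', h, (g (n + 1)).mapIso β.symm ≪≫ γ, ?_⟩
      have hβ' : (p n).map β.inv = eqToHom h ≫ ε.inv := by
        rw [Iso.eq_comp_inv, ← hβ, ← Category.assoc, ← Functor.map_comp, Iso.inv_hom_id]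
        simp
      have hε : (g n).map ε.inv = δ.inv := by
        simp [ε, Functor.preimageIso]
      have hδ : δ.inv
          = α.hom ≫ eqToHom (Y.w n).symm ≫ (q n).map γ.inv ≫ eqToHom (hso n d).symm := by
        simp [δ]
      have e1 : eqToHom (hso n c'') ≫ (q n).map ((g (n + 1)).map β.inv)
          = (g n).map ((p n).map β.inv) ≫ eqToHom (hso n d) := by
        rw [hsm n β.inv]; simp
      simp only [Iso.trans_hom, Functor.mapIso_hom, Iso.symm_hom]
      rw [Functor.map_comp, ← Category.assoc, e1, hβ', Functor.map_comp, hε, hδ, eqToHom_map]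
      simp
    choose c' hpc α' hcompat using step
    let R : ∀ n, Σ' (c : C n), (g n).obj c ≅ Y.pt n := fun n =>
      Nat.rec ⟨(g 0).objPreimage (Y.pt 0), (g 0).objObjPreimageIso (Y.pt 0)⟩
        (fun n ih => ⟨c' n ih.1 ih.2, α' n ih.1 ih.2⟩) n
    have hR : ∀ n, R (n + 1) = ⟨c' n (R n).1 (R n).2, α' n (R n).1 (R n).2⟩ := fun n => rfl
    let X : TowerLim C p :=
      ⟨fun n => (R n).1, fun n => hpc n (R n).1 (R n).2⟩
    refine ⟨X, ⟨?_⟩⟩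
    have φcompat : ∀ n, (q n).map (eqToHom (hfo (n + 1) X) ≫ (R (n + 1)).2.hom)
        = eqToHom ((f.obj X).w n)
          ≫ (eqToHom (hfo n X) ≫ (R n).2.hom) ≫ eqToHom (Y.w n).symm := by
      intro n
      have hc := hcompat n (R n).1 (R n).2
      have hq : (q n).map (α' n (R n).1 (R n).2).hom
          = eqToHom (hso n (c' n (R n).1 (R n).2)).symm
            ≫ (g n).map (eqToHom (hpc n (R n).1 (R n).2)) ≫ (R n).2.hom
            ≫ eqToHom (Y.w n).symm := by
        rw [← hc, ← Category.assoc, eqToHom_trans, eqToHom_refl, Category.id_comp]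
      have hA : (R (n + 1)).2 = α' n (R n).1 (R n).2 := rfl
      rw [hA, Functor.map_comp, eqToHom_map, hq, eqToHom_map]
      simp
    let φ : f.obj X ⟶ Y := ⟨fun n => eqToHom (hfo n X) ≫ (R n).2.hom, φcompat⟩
    haveI : IsIso φ := TowerLim.isIso_of_components φ (fun n => by
      dsimp only [φ]; infer_instance)
    exact asIso φ
end
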